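/- arXiv:2007.10482 — 4 statements merged into one kernel-verified Lean document; each statement's English description precedes it below -/
import Mathlib

section
/- (Reverse Minkowski inequality) Let p ≥ 1, α > 0, β ∈ (0,1], and let f, g be positive functions on [1,∞) with H^{α,β}_{1,x}[f^p](x) < ∞ and H^{α,β}_{1,x}[g^p](x) < ∞ for x > 1. If 0 < m ≤ f(τ)/g(τ) ≤ M for all τ ∈ (1,x), then (H^{α,β}_{1,x}[f^p](x))^{1/p} + (H^{α,β}_{1,x}[g^p](x))^{1/p} ≤ ((1 + M(m+2))/((m+1)(M+1))) · (H^{α,β}_{1,x}[(f+g)^p](x))^{1/p}. -/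
/-!
Pointwise, `m ≤ f / g ≤ M` gives `f ≤ M / (M + 1) * (f + g)` and `g ≤ 1 / (m + 1) * (f + g)`.
The integral `H` is monotone with a positive kernel, so raising to the power `p`, integrating
and taking `p`-th roots keeps these bounds, and the two constants add up to
`(1 + M (m + 2)) / ((m + 1) (M + 1))`.
-/

open MeasureTheory Real

/-- Kernel of the generalized proportional Hadamard fractional integral. -/
noncomputable def Hker (α β x : ℝ) (z : ℝ → ℝ) (t : ℝ) : ℝ :=
  Real.exp ((β - 1) / β * (Real.log x - Real.log t)) *
    (Real.log x - Real.log t) ^ (α - 1) * z t / t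

/-- The one-sided generalized proportional Hadamard fractional integral
`H^{α,β}_{1,x}[z](x)`. -/
noncomputable def H (α β x : ℝ) (z : ℝ → ℝ) : ℝ :=
  (1 / (β ^ α * Real.Gamma α)) * ∫ t in Set.Ioo 1 x, Hker α β x z t

open Set

lemma le_div_add_one_mul_add {a b M : ℝ} (ha : 0 ≤ a) (hb : 0 < b) (h : a / b ≤ M) :
    a ≤ M / (M + 1) * (a + b) := by
  have hM : 0 ≤ M := (div_nonneg ha hb.le).trans h
  rw [div_le_iff₀ hb] at h
  rw [div_mul_eq_mul_div, le_div_iff₀ (by linarith)]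
  nlinarith

lemma le_one_div_add_one_mul_add {a b m : ℝ} (hb : 0 < b) (hm : -1 < m) (h : m ≤ a / b) :
    b ≤ 1 / (m + 1) * (a + b) := by
  rw [le_div_iff₀ hb] at h
  rw [div_mul_eq_mul_div, le_div_iff₀ (by linarith)]
  nlinarith

lemma Hker_eq_mul (α β x : ℝ) (z : ℝ → ℝ) (t : ℝ) :
    Hker α β x z t =
      exp ((β - 1) / β * (log x - log t)) * (log x - log t) ^ (α - 1) / t * z t := by
  unfold Hker
  ring

lemma Hker_weight_nonneg (α β : ℝ) {x t : ℝ} (ht : t ∈ Ioc 0 x) :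
    0 ≤ exp ((β - 1) / β * (log x - log t)) * (log x - log t) ^ (α - 1) / t := by
  have hlog : 0 ≤ log x - log t := sub_nonneg.2 (log_le_log ht.1 ht.2)
  have := rpow_nonneg hlog (α - 1)
  have := ht.1
  positivity

lemma Hker_nonneg (α β : ℝ) {x t : ℝ} {z : ℝ → ℝ} (ht : t ∈ Ioc 0 x) (hz : 0 ≤ z t) :
    0 ≤ Hker α β x z t := by
  rw [Hker_eq_mul]
  exact mul_nonneg (Hker_weight_nonneg α β ht) hz

lemma Hker_le_mul (α β : ℝ) {x t c : ℝ} {z w : ℝ → ℝ} (ht : t ∈ Ioc 0 x)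
    (hle : z t ≤ c * w t) : Hker α β x z t ≤ c * Hker α β x w t := by
  rw [Hker_eq_mul, Hker_eq_mul, mul_left_comm]
  exact mul_le_mul_of_nonneg_left hle (Hker_weight_nonneg α β ht)

section H

variable {α β x : ℝ} (hα : 0 < α) (hβ : 0 < β)
include hα hβ

lemma H_coeff_nonneg : 0 ≤ 1 / (β ^ α * Gamma α) := by
  have := Gamma_pos_of_pos hα
  positivity

lemma H_nonneg {z : ℝ → ℝ} (hz : ∀ t ∈ Ioo 1 x, 0 ≤ z t) : 0 ≤ H α β x z :=
  mul_nonneg (H_coeff_nonneg hα hβ) <| setIntegral_nonneg measurableSet_Ioo fun t ht =>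
    Hker_nonneg α β ⟨one_pos.trans ht.1, ht.2.le⟩ (hz t ht)

lemma H_le_mul {c : ℝ} {z w : ℝ → ℝ}
    (hzint : IntegrableOn (Hker α β x z) (Ioo 1 x))
    (hwint : IntegrableOn (Hker α β x w) (Ioo 1 x))
    (hle : ∀ t ∈ Ioo 1 x, z t ≤ c * w t) :
    H α β x z ≤ c * H α β x w := by
  unfold H
  rw [mul_left_comm, ← integral_const_mul c]
  exact mul_le_mul_of_nonneg_left
    (setIntegral_mono_on hzint (hwint.const_mul c) measurableSet_Ioo fun t ht =>
      Hker_le_mul α β ⟨one_pos.trans ht.1, ht.2.le⟩ (hle t ht))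
    (H_coeff_nonneg hα hβ)

lemma H_rpow_root_le_mul {p c : ℝ} {z w : ℝ → ℝ} (hp : 0 < p) (hc : 0 < c)
    (hz : ∀ t ∈ Ioo 1 x, 0 ≤ z t) (hle : ∀ t ∈ Ioo 1 x, z t ≤ c * w t)
    (hzint : IntegrableOn (Hker α β x fun t => z t ^ p) (Ioo 1 x))
    (hwint : IntegrableOn (Hker α β x fun t => w t ^ p) (Ioo 1 x)) :
    (H α β x fun t => z t ^ p) ^ (1 / p) ≤ c * (H α β x fun t => w t ^ p) ^ (1 / p) := by
  have hw : ∀ t ∈ Ioo 1 x, 0 ≤ w t := fun t ht =>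
    nonneg_of_mul_nonneg_right ((hz t ht).trans (hle t ht)) hc
  have hpow : ∀ t ∈ Ioo 1 x, z t ^ p ≤ c ^ p * w t ^ p := fun t ht => by
    rw [← mul_rpow hc.le (hw t ht)]
    exact rpow_le_rpow (hz t ht) (hle t ht) hp.le
  have hHw : 0 ≤ H α β x fun t => w t ^ p :=
    H_nonneg hα hβ fun t ht => rpow_nonneg (hw t ht) p
  calc (H α β x fun t => z t ^ p) ^ (1 / p)
      ≤ (c ^ p * H α β x fun t => w t ^ p) ^ (1 / p) :=
        rpow_le_rpow (H_nonneg hα hβ fun t ht => rpow_nonneg (hz t ht) p)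
          (H_le_mul hα hβ hzint hwint hpow) (by positivity)
    _ = c * (H α β x fun t => w t ^ p) ^ (1 / p) := by
        rw [mul_rpow (by positivity) hHw, one_div, rpow_rpow_inv hc.le hp.ne']

end H

theorem stmt_3 (p α β m M x : ℝ) (f g : ℝ → ℝ) (hp : 1 ≤ p) (hα : 0 < α)
    (hβ : β ∈ Set.Ioc (0:ℝ) 1) (hx : 1 < x)
    (hf : ∀ t ∈ Set.Ici (1:ℝ), 0 < f t) (hg : ∀ t ∈ Set.Ici (1:ℝ), 0 < g t)
    (hfint : IntegrableOn (Hker α β x (fun t => f t ^ p)) (Set.Ioo 1 x))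
    (hgint : IntegrableOn (Hker α β x (fun t => g t ^ p)) (Set.Ioo 1 x))
    (hfgint : IntegrableOn (Hker α β x (fun t => (f t + g t) ^ p)) (Set.Ioo 1 x))
    (hm : 0 < m)
    (hbound : ∀ t ∈ Set.Ioo (1:ℝ) x, m ≤ f t / g t ∧ f t / g t ≤ M) :
    (H α β x fun t => f t ^ p) ^ (1 / p) + (H α β x fun t => g t ^ p) ^ (1 / p) ≤
      (1 + M * (m + 2)) / ((m + 1) * (M + 1)) *
        (H α β x fun t => (f t + g t) ^ p) ^ (1 / p) := by
  have hp0 : 0 < p := one_pos.trans_le hp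
  have hf' : ∀ t ∈ Ioo 1 x, 0 < f t := fun t ht => hf t ht.1.le
  have hg' : ∀ t ∈ Ioo 1 x, 0 < g t := fun t ht => hg t ht.1.le
  have hM : 0 < M := by
    have ht : (1 + x) / 2 ∈ Ioo 1 x := ⟨by linarith, by linarith⟩
    exact hm.trans_le ((hbound _ ht).1.trans (hbound _ ht).2)
  have hF := H_rpow_root_le_mul hα hβ.1 hp0 (by positivity : 0 < M / (M + 1))
    (fun t ht => (hf' t ht).le)
    (fun t ht => le_div_add_one_mul_add (hf' t ht).le (hg' t ht) (hbound t ht).2)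
    hfint hfgint
  have hG := H_rpow_root_le_mul hα hβ.1 hp0 (by positivity : 0 < 1 / (m + 1))
    (fun t ht => (hg' t ht).le)
    (fun t ht => le_one_div_add_one_mul_add (hg' t ht) (by linarith) (hbound t ht).1)
    hgint hfgint
  calc _ ≤ M / (M + 1) * (H α β x fun t => (f t + g t) ^ p) ^ (1 / p) +
        1 / (m + 1) * (H α β x fun t => (f t + g t) ^ p) ^ (1 / p) := add_le_add hF hG
    _ = _ := by
      rw [← add_mul]
      congr 1
      field_simp
      ring
end

section
/- Let p > 1, 1/p + 1/q = 1, α > 0, β ∈ (0,1], x > 1, and let f, g be positive functions on [1,∞) with H^{α,β}_{1,x}[f](x) < ∞, H^{α,β}_{1,x}[g](x) < ∞. If 0 < m ≤ f(τ)/g(τ) ≤ M < ∞ for τ ∈ (1,x), then (H^{α,β}_{1,x}[f](x))^{1/p} · (H^{α,β}_{1,x}[g](x))^{1/q} ≤ (M/m)^{1/(pq)} · H^{α,β}_{1,x}[f^{1/p} g^{1/q}](x). -/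
/-!
With `h = f ^ s * g ^ t` (`s + t = 1`), the ratio bounds give `f = f ^ s * f ^ t ≤ M ^ t * h`
and `g ≤ m⁻¹ ^ s * h` pointwise; integrating, raising to the powers `s` and `t` and multiplying
yields `(∫ f) ^ s * (∫ g) ^ t ≤ (M / m) ^ (s * t) * ∫ h`. The Hadamard integral is the case of
Lebesgue measure on `(1, x)` applied to the kernels `Hker f` and `Hker g`: the kernel weight is
positive, so it does not change the ratio, and it factors out of `h` because `s + t = 1`.
-/

open MeasureTheory Real

section RpowInequalities

variable {a b c s t : ℝ}

theorem le_rpow_mul_rpow_mul_of_le_mul (ha : 0 ≤ a) (hb : 0 ≤ b) (hc : 0 ≤ c) (ht : 0 ≤ t)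
    (hst : s + t = 1) (h : a ≤ c * b) : a ≤ c ^ t * (a ^ s * b ^ t) :=
  calc a = a ^ s * a ^ t := by rw [← rpow_add' ha (by simp [hst]), hst, rpow_one]
    _ ≤ a ^ s * (c * b) ^ t := by gcongr
    _ = c ^ t * (a ^ s * b ^ t) := by rw [mul_rpow hc hb]; ring

theorem mul_rpow_mul_mul_rpow (hc : 0 ≤ c) (ha : 0 ≤ a) (hb : 0 ≤ b) (hst : s + t = 1) :
    (c * a) ^ s * (c * b) ^ t = c * (a ^ s * b ^ t) := by
  rw [mul_rpow hc ha, mul_rpow hc hb, mul_mul_mul_comm, ← rpow_add' hc (by simp [hst]), hst,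
    rpow_one]

theorem rpow_mul_rpow_le_of_le_mul {A B I : ℝ} (hA : 0 ≤ A) (hB : 0 ≤ B) (ha : 0 ≤ a)
    (hb : 0 ≤ b) (hI : 0 ≤ I) (hs : 0 ≤ s) (ht : 0 ≤ t) (hst : s + t = 1)
    (hAI : A ≤ a * I) (hBI : B ≤ b * I) : A ^ s * B ^ t ≤ a ^ s * b ^ t * I :=
  calc A ^ s * B ^ t ≤ (a * I) ^ s * (b * I) ^ t := by gcongr
    _ = a ^ s * b ^ t * I := by
      rw [mul_rpow ha hI, mul_rpow hb hI, mul_mul_mul_comm, ← rpow_add' hI (by simp [hst]), hst,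
        rpow_one]

end RpowInequalities

theorem integral_rpow_mul_integral_rpow_le_of_bounded_ratio {Ω : Type*} [MeasurableSpace Ω]
    {μ : Measure Ω} {f g : Ω → ℝ} {s t m M : ℝ} (hs : 0 ≤ s) (ht : 0 ≤ t) (hst : s + t = 1)
    (hm : 0 < m) (hM : 0 ≤ M) (hf : ∀ᵐ ω ∂μ, 0 ≤ f ω) (hg : ∀ᵐ ω ∂μ, 0 ≤ g ω)
    (hfi : Integrable f μ) (hgi : Integrable g μ)
    (hbound : ∀ᵐ ω ∂μ, m * g ω ≤ f ω ∧ f ω ≤ M * g ω) :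
    (∫ ω, f ω ∂μ) ^ s * (∫ ω, g ω ∂μ) ^ t ≤
      (M / m) ^ (s * t) * ∫ ω, f ω ^ s * g ω ^ t ∂μ := by
  have hhi : Integrable (fun ω ↦ f ω ^ s * g ω ^ t) μ := by
    refine (hfi.const_mul s |>.add (hgi.const_mul t)).mono' ?_ ?_
    · exact ((hfi.aemeasurable.pow_const s).mul
        (hgi.aemeasurable.pow_const t)).aestronglyMeasurable
    filter_upwards [hf, hg] with ω hfω hgω
    rw [norm_of_nonneg (by positivity)]
    exact geom_mean_le_arith_mean2_weighted hs ht hfω hgω hst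
  have hfh : ∫ ω, f ω ∂μ ≤ M ^ t * ∫ ω, f ω ^ s * g ω ^ t ∂μ := by
    rw [← integral_const_mul]
    refine integral_mono_ae hfi (hhi.const_mul _) ?_
    filter_upwards [hf, hg, hbound] with ω hfω hgω hω
    exact le_rpow_mul_rpow_mul_of_le_mul hfω hgω hM ht hst hω.2
  have hgh : ∫ ω, g ω ∂μ ≤ m⁻¹ ^ s * ∫ ω, f ω ^ s * g ω ^ t ∂μ := by
    rw [← integral_const_mul]
    refine integral_mono_ae hgi (hhi.const_mul _) ?_
    filter_upwards [hf, hg, hbound] with ω hfω hgω hω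
    rw [mul_comm (f ω ^ s)]
    exact le_rpow_mul_rpow_mul_of_le_mul hgω hfω (by positivity) hs (by linarith)
      ((le_inv_mul_iff₀ hm).2 hω.1)
  calc (∫ ω, f ω ∂μ) ^ s * (∫ ω, g ω ∂μ) ^ t
      ≤ (M ^ t) ^ s * (m⁻¹ ^ s) ^ t * ∫ ω, f ω ^ s * g ω ^ t ∂μ :=
        rpow_mul_rpow_le_of_le_mul (integral_nonneg_of_ae hf) (integral_nonneg_of_ae hg)
          (by positivity) (by positivity) (integral_nonneg_of_ae (by
            filter_upwards [hf, hg] with ω hfω hgω; positivity)) hs ht hst hfh hgh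
    _ = (M / m) ^ (s * t) * ∫ ω, f ω ^ s * g ω ^ t ∂μ := by
      rw [← rpow_mul hM, ← rpow_mul (by positivity), mul_comm t s,
        ← mul_rpow hM (by positivity), div_eq_mul_inv]

noncomputable def hadamardWeight (α β x t : ℝ) : ℝ :=
  exp ((β - 1) / β * (log x - log t)) * (log x - log t) ^ (α - 1) / t

theorem Hker_eq_hadamardWeight_mul (α β x : ℝ) (z : ℝ → ℝ) (t : ℝ) :
    Hker α β x z t = hadamardWeight α β x t * z t := by
  unfold Hker hadamardWeight
  ring

section OnInterval

variable {α β x t : ℝ}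

theorem hadamardWeight_pos (ht : t ∈ Set.Ioo 1 x) : 0 < hadamardWeight α β x t := by
  have hlog : 0 < log x - log t := sub_pos.2 (log_lt_log (by linarith [ht.1]) ht.2)
  exact div_pos (mul_pos (exp_pos _) (rpow_pos_of_pos hlog _)) (by linarith [ht.1])

theorem Hker_pos (ht : t ∈ Set.Ioo 1 x) {z : ℝ → ℝ} (hz : 0 < z t) : 0 < Hker α β x z t := by
  rw [Hker_eq_hadamardWeight_mul]
  exact mul_pos (hadamardWeight_pos ht) hz

theorem Hker_div_Hker (ht : t ∈ Set.Ioo 1 x) (f g : ℝ → ℝ) :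
    Hker α β x f t / Hker α β x g t = f t / g t := by
  simp only [Hker_eq_hadamardWeight_mul]
  exact mul_div_mul_left _ _ (hadamardWeight_pos ht).ne'

theorem Hker_rpow_mul_rpow (ht : t ∈ Set.Ioo 1 x) {f g : ℝ → ℝ} {s r : ℝ} (hf : 0 ≤ f t)
    (hg : 0 ≤ g t) (hsr : s + r = 1) :
    Hker α β x (fun τ ↦ f τ ^ s * g τ ^ r) t = Hker α β x f t ^ s * Hker α β x g t ^ r := by
  simp only [Hker_eq_hadamardWeight_mul]
  exact (mul_rpow_mul_mul_rpow (hadamardWeight_pos ht).le hf hg hsr).symm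

end OnInterval

theorem stmt_7 (p q α β m M x : ℝ) (f g : ℝ → ℝ) (hp : 1 < p)
    (hpq : 1 / p + 1 / q = 1) (hα : 0 < α) (hβ : β ∈ Set.Ioc (0:ℝ) 1) (hx : 1 < x)
    (hf : ∀ t ∈ Set.Ici (1:ℝ), 0 < f t) (hg : ∀ t ∈ Set.Ici (1:ℝ), 0 < g t)
    (hfint : IntegrableOn (Hker α β x f) (Set.Ioo 1 x))
    (hgint : IntegrableOn (Hker α β x g) (Set.Ioo 1 x))
    (hm : 0 < m)
    (hbound : ∀ t ∈ Set.Ioo (1:ℝ) x, m ≤ f t / g t ∧ f t / g t ≤ M) :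
    (H α β x f) ^ (1 / p) * (H α β x g) ^ (1 / q) ≤
      (M / m) ^ (1 / (p * q)) * H α β x (fun t => f t ^ (1 / p) * g t ^ (1 / q)) := by
  have hp' : 0 < 1 / p := by positivity
  have hq' : 0 < 1 / q := by linarith [(div_lt_one (by positivity : (0:ℝ) < p)).2 hp]
  have hM : 0 ≤ M := by
    obtain ⟨hm_le, hle_M⟩ := hbound ((1 + x) / 2) ⟨by linarith, by linarith⟩
    linarith
  have hfpos (t) (ht : t ∈ Set.Ioo 1 x) : 0 < Hker α β x f t := Hker_pos ht (hf t ht.1.le)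
  have hgpos (t) (ht : t ∈ Set.Ioo 1 x) : 0 < Hker α β x g t := Hker_pos ht (hg t ht.1.le)
  have hratio : ∀ t ∈ Set.Ioo 1 x,
      m * Hker α β x g t ≤ Hker α β x f t ∧ Hker α β x f t ≤ M * Hker α β x g t := by
    intro t ht
    rw [← le_div_iff₀ (hgpos t ht), ← div_le_iff₀ (hgpos t ht), Hker_div_Hker ht]
    exact hbound t ht
  have key := integral_rpow_mul_integral_rpow_le_of_bounded_ratio hp'.le hq'.le hpq hm hM
    (ae_restrict_of_forall_mem measurableSet_Ioo fun t ht ↦ (hfpos t ht).le)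
    (ae_restrict_of_forall_mem measurableSet_Ioo fun t ht ↦ (hgpos t ht).le)
    hfint hgint (ae_restrict_of_forall_mem measurableSet_Ioo hratio)
  have hc : 0 < 1 / (β ^ α * Gamma α) := by
    have := Gamma_pos_of_pos hα
    have := rpow_pos_of_pos hβ.1 α
    positivity
  unfold H
  rw [mul_rpow_mul_mul_rpow hc.le
    (setIntegral_nonneg measurableSet_Ioo fun t ht ↦ (hfpos t ht).le)
    (setIntegral_nonneg measurableSet_Ioo fun t ht ↦ (hgpos t ht).le) hpq,
    setIntegral_congr_fun measurableSet_Ioo fun t ht ↦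
      Hker_rpow_mul_rpow ht (hf t ht.1.le).le (hg t ht.1.le).le hpq]
  rw [one_div_mul_one_div] at key
  exact (mul_le_mul_of_nonneg_left key hc.le).trans_eq (mul_left_comm _ _ _)
end

section
/- Let p > 1, 1/p + 1/q = 1, α > 0, β ∈ (0,1], x > 1, and f, g positive integrable functions on [1,∞) with 0 < m < f(τ)/g(τ) < M for τ ∈ (1,x). Then H^{α,β}_{1,x}[fg](x) ≤ (2^{p-1} M^p / (p(M+1)^p)) · H^{α,β}_{1,x}[f^p + g^p](x) + (2^{q-1} / (q(m+1)^q)) · H^{α,β}_{1,x}[f^q + g^q](x). -/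
open MeasureTheory Real

/-!
Pointwise, Young's inequality gives `f g ≤ f^p/p + g^q/q`. The ratio bounds `m < f/g < M`
say `f ≤ M/(M+1) · (f+g)` and `g ≤ 1/(m+1) · (f+g)`, and the power-mean inequality
`(f+g)^r ≤ 2^(r-1) (f^r+g^r)` turns these into the two terms of the right-hand side.
Integrating against the nonnegative kernel of `H` preserves the inequality.
-/

theorem Real.rpow_add_le_mul_rpow_add_rpow {a b p : ℝ} (ha : 0 ≤ a) (hb : 0 ≤ b)
    (hp : 1 ≤ p) :
    (a + b) ^ p ≤ 2 ^ (p - 1) * (a ^ p + b ^ p) := by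
  lift a to NNReal using ha
  lift b to NNReal using hb
  exact_mod_cast NNReal.rpow_add_le_mul_rpow_add_rpow a b hp

theorem rpow_le_of_le_mul_add {a b c p : ℝ} (ha : 0 ≤ a) (hb : 0 ≤ b) (hc : 0 ≤ c)
    (hp : 1 ≤ p) (h : a ≤ c * (a + b)) :
    a ^ p ≤ c ^ p * (2 ^ (p - 1) * (a ^ p + b ^ p)) :=
  calc a ^ p ≤ (c * (a + b)) ^ p := rpow_le_rpow ha h (by linarith)
    _ = c ^ p * (a + b) ^ p := mul_rpow hc (by positivity)
    _ ≤ c ^ p * (2 ^ (p - 1) * (a ^ p + b ^ p)) := by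
      gcongr
      exact rpow_add_le_mul_rpow_add_rpow ha hb hp

theorem mul_le_of_div_mem_Ioo {p q m M a b : ℝ} (hpq : p.HolderConjugate q)
    (ha : 0 < a) (hb : 0 < b) (hm : -1 < m) (hmab : m < a / b) (hMab : a / b < M) :
    a * b ≤ 2 ^ (p - 1) * M ^ p / (p * (M + 1) ^ p) * (a ^ p + b ^ p) +
      2 ^ (q - 1) / (q * (m + 1) ^ q) * (a ^ q + b ^ q) := by
  have hM : 0 < M := (div_pos ha hb).trans hMab
  have hMb : a < M * b := (div_lt_iff₀ hb).mp hMab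
  have hmb : m * b < a := (lt_div_iff₀ hb).mp hmab
  have ha_le : a ≤ M / (M + 1) * (a + b) := by
    rw [div_mul_eq_mul_div, le_div_iff₀ (by linarith)]
    linarith
  have hb_le : b ≤ 1 / (m + 1) * (b + a) := by
    rw [div_mul_eq_mul_div, le_div_iff₀ (by linarith)]
    linarith
  have hm1 : 0 < m + 1 := by linarith
  have hA := rpow_le_of_le_mul_add ha.le hb.le (by positivity) hpq.lt.le ha_le
  have hB := rpow_le_of_le_mul_add hb.le ha.le (by positivity) hpq.symm.lt.le hb_le
  rw [div_rpow hM.le (by linarith)] at hA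
  rw [div_rpow zero_le_one hm1.le, one_rpow, add_comm (b ^ q)] at hB
  have hp := hpq.pos
  have hq := hpq.symm.pos
  calc a * b ≤ a ^ p / p + b ^ q / q := young_inequality_of_nonneg ha.le hb.le hpq
    _ ≤ M ^ p / (M + 1) ^ p * (2 ^ (p - 1) * (a ^ p + b ^ p)) / p +
        1 / (m + 1) ^ q * (2 ^ (q - 1) * (a ^ q + b ^ q)) / q := by gcongr
    _ = _ := by ring

theorem Hker_add_mul (α β x A B : ℝ) (z w : ℝ → ℝ) :
    Hker α β x (fun t => A * z t + B * w t) =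
      fun t => A * Hker α β x z t + B * Hker α β x w t := by
  funext t
  unfold Hker
  ring

theorem Hker_le_Hker {α β x t : ℝ} {z w : ℝ → ℝ} (ht : 0 < t) (htx : t ≤ x)
    (h : z t ≤ w t) :
    Hker α β x z t ≤ Hker α β x w t := by
  have hlog : 0 ≤ log x - log t := sub_nonneg.mpr (log_le_log ht htx)
  unfold Hker
  gcongr

theorem H_mono {α β x : ℝ} {z w : ℝ → ℝ} (hα : 0 < α) (hβ : 0 < β)
    (hz : IntegrableOn (Hker α β x z) (Set.Ioo 1 x))
    (hw : IntegrableOn (Hker α β x w) (Set.Ioo 1 x))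
    (h : ∀ t ∈ Set.Ioo 1 x, z t ≤ w t) :
    H α β x z ≤ H α β x w := by
  have hc : 0 ≤ 1 / (β ^ α * Gamma α) := by
    have := rpow_pos_of_pos hβ α
    have := Gamma_pos_of_pos hα
    positivity
  refine mul_le_mul_of_nonneg_left (setIntegral_mono_on hz hw measurableSet_Ioo ?_) hc
  exact fun t ht => Hker_le_Hker (by linarith [ht.1]) ht.2.le (h t ht)

theorem H_add_mul {α β x : ℝ} (A B : ℝ) {z w : ℝ → ℝ}
    (hz : IntegrableOn (Hker α β x z) (Set.Ioo 1 x))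
    (hw : IntegrableOn (Hker α β x w) (Set.Ioo 1 x)) :
    H α β x (fun t => A * z t + B * w t) = A * H α β x z + B * H α β x w := by
  unfold H
  rw [Hker_add_mul, integral_add (hz.const_mul A) (hw.const_mul B),
    integral_const_mul, integral_const_mul]
  ring

theorem stmt_9_general (p q α β m M x : ℝ) (f g : ℝ → ℝ) (hp : 1 < p)
    (hpq : 1 / p + 1 / q = 1) (hα : 0 < α) (hβ : β ∈ Set.Ioc (0:ℝ) 1)
    (hf : ∀ t ∈ Set.Ici (1:ℝ), 0 < f t) (hg : ∀ t ∈ Set.Ici (1:ℝ), 0 < g t)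
    (hfgint : IntegrableOn (Hker α β x (fun t => f t * g t)) (Set.Ioo 1 x))
    (hpint : IntegrableOn (Hker α β x (fun t => f t ^ p + g t ^ p)) (Set.Ioo 1 x))
    (hqint : IntegrableOn (Hker α β x (fun t => f t ^ q + g t ^ q)) (Set.Ioo 1 x))
    (hm : 0 < m)
    (hbound : ∀ t ∈ Set.Ioo (1:ℝ) x, m < f t / g t ∧ f t / g t < M) :
    H α β x (fun t => f t * g t) ≤
      (2 : ℝ) ^ (p - 1) * M ^ p / (p * (M + 1) ^ p) *
          H α β x (fun t => f t ^ p + g t ^ p) +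
        (2 : ℝ) ^ (q - 1) / (q * (m + 1) ^ q) *
          H α β x (fun t => f t ^ q + g t ^ q) := by
  have hpq' : p.HolderConjugate q :=
    holderConjugate_iff.mpr ⟨hp, by simpa only [one_div] using hpq⟩
  rw [← H_add_mul _ _ hpint hqint]
  refine H_mono hα hβ.1 hfgint ?_ fun t ht => ?_
  · rw [Hker_add_mul]
    exact (hpint.const_mul _).add (hqint.const_mul _)
  · exact mul_le_of_div_mem_Ioo hpq' (hf t ht.1.le) (hg t ht.1.le) (by linarith)
      (hbound t ht).1 (hbound t ht).2

theorem stmt_9 (p q α β m M x : ℝ) (f g : ℝ → ℝ) (hp : 1 < p)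
    (hpq : 1 / p + 1 / q = 1) (hα : 0 < α) (hβ : β ∈ Set.Ioc (0:ℝ) 1) (hx : 1 < x)
    (hf : ∀ t ∈ Set.Ici (1:ℝ), 0 < f t) (hg : ∀ t ∈ Set.Ici (1:ℝ), 0 < g t)
    (hfgint : IntegrableOn (Hker α β x (fun t => f t * g t)) (Set.Ioo 1 x))
    (hpint : IntegrableOn (Hker α β x (fun t => f t ^ p + g t ^ p)) (Set.Ioo 1 x))
    (hqint : IntegrableOn (Hker α β x (fun t => f t ^ q + g t ^ q)) (Set.Ioo 1 x))
    (hm : 0 < m)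
    (hbound : ∀ t ∈ Set.Ioo (1:ℝ) x, m < f t / g t ∧ f t / g t < M) :
    H α β x (fun t => f t * g t) ≤
      (2 : ℝ) ^ (p - 1) * M ^ p / (p * (M + 1) ^ p) *
          H α β x (fun t => f t ^ p + g t ^ p) +
        (2 : ℝ) ^ (q - 1) / (q * (m + 1) ^ q) *
          H α β x (fun t => f t ^ q + g t ^ q) :=
  stmt_9_general p q α β m M x f g hp hpq hα hβ hf hg hfgint hpint hqint hm hbound
end

section
/- (Two-parameter Chebyshev-type inequality) Let f, g, h be positive continuous functions on [1,∞) such that (g(τ) − g(σ)) · (f(σ)/h(σ) − f(τ)/h(τ)) ≥ 0 for all τ, σ ∈ (1,x), x > 1. Then for α, φ > 0 and β, φ' ∈ (0,1]: H^{α,β}_{1,x}[f](x)·H^{φ,φ'}_{1,x}[g·h](x) + H^{φ,φ'}_{1,x}[f](x)·H^{α,β}_{1,x}[g·h](x) ≥ H^{α,β}_{1,x}[h](x)·H^{φ,φ'}_{1,x}[g·f](x) + H^{φ,φ'}_{1,x}[h](x)·H^{α,β}_{1,x}[g·f](x). -/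
/-!
Chebyshev's argument, in two variables: up to the nonnegative product of the normalising
constants, the difference of the two sides is the integral over `(1,x)²` of
`w(τ) w'(σ) h(τ) h(σ) (g τ - g σ) (f σ / h σ - f τ / h τ)`, where `w`, `w'` are the
nonnegative kernel weights of the two fractional integrals, and the integrand is
nonnegative by the synchronicity hypothesis.
-/

open MeasureTheory Real

theorem integral_mul_add_integral_mul_le_of_ae {X Y : Type*} [MeasurableSpace X]
    [MeasurableSpace Y] {μ : Measure X} {ν : Measure Y} [SFinite μ] [SFinite ν]
    {a c e l : X → ℝ} {b d k m : Y → ℝ}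
    (ha : Integrable a μ) (hb : Integrable b ν) (hc : Integrable c μ) (hd : Integrable d ν)
    (he : Integrable e μ) (hk : Integrable k ν) (hl : Integrable l μ) (hm : Integrable m ν)
    (hle : ∀ᵐ z ∂(μ.prod ν), e z.1 * k z.2 + l z.1 * m z.2 ≤ a z.1 * b z.2 + c z.1 * d z.2) :
    (∫ x, e x ∂μ) * (∫ y, k y ∂ν) + (∫ x, l x ∂μ) * (∫ y, m y ∂ν) ≤
      (∫ x, a x ∂μ) * (∫ y, b y ∂ν) + (∫ x, c x ∂μ) * (∫ y, d y ∂ν) := by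
  simp only [← integral_prod_mul]
  rw [← integral_add (he.mul_prod hk) (hl.mul_prod hm),
    ← integral_add (ha.mul_prod hb) (hc.mul_prod hd)]
  exact integral_mono_ae ((he.mul_prod hk).add (hl.mul_prod hm))
    ((ha.mul_prod hb).add (hc.mul_prod hd)) hle

theorem cross_le_of_synchronous {f₁ f₂ g₁ g₂ h₁ h₂ : ℝ} (h₁_pos : 0 < h₁) (h₂_pos : 0 < h₂)
    (hsync : 0 ≤ (g₁ - g₂) * (f₂ / h₂ - f₁ / h₁)) :
    h₁ * (g₂ * f₂) + g₁ * f₁ * h₂ ≤ f₁ * (g₂ * h₂) + g₁ * h₁ * f₂ := by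
  have hexpand : h₁ * h₂ * ((g₁ - g₂) * (f₂ / h₂ - f₁ / h₁)) =
      f₁ * (g₂ * h₂) + g₁ * h₁ * f₂ - (h₁ * (g₂ * f₂) + g₁ * f₁ * h₂) := by
    field_simp
    ring
  linarith [mul_nonneg (mul_pos h₁_pos h₂_pos).le hsync]

theorem hadamardWeight_nonneg (α β : ℝ) {x t : ℝ} (ht : 0 < t) (htx : t ≤ x) :
    0 ≤ hadamardWeight α β x t := by
  have hlog : 0 ≤ log x - log t := sub_nonneg.2 (log_le_log ht htx)
  have := rpow_nonneg hlog (α - 1)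
  unfold hadamardWeight
  positivity

theorem hadamard_normalization_nonneg {α β : ℝ} (hα : 0 < α) (hβ : 0 ≤ β) :
    0 ≤ 1 / (β ^ α * Gamma α) := by
  have := Gamma_pos_of_pos hα
  have := rpow_nonneg hβ α
  positivity

theorem Hker_cross_le_of_synchronous (α β φ φ' x : ℝ) {f g h : ℝ → ℝ} {τ σ : ℝ}
    (hτ : 0 < τ) (hτx : τ ≤ x) (hσ : 0 < σ) (hσx : σ ≤ x) (hhτ : 0 < h τ) (hhσ : 0 < h σ)
    (hsync : 0 ≤ (g τ - g σ) * (f σ / h σ - f τ / h τ)) :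
    Hker α β x h τ * Hker φ φ' x (fun t => g t * f t) σ +
        Hker α β x (fun t => g t * f t) τ * Hker φ φ' x h σ ≤
      Hker α β x f τ * Hker φ φ' x (fun t => g t * h t) σ +
        Hker α β x (fun t => g t * h t) τ * Hker φ φ' x f σ := by
  have hw : 0 ≤ hadamardWeight α β x τ * hadamardWeight φ φ' x σ :=
    mul_nonneg (hadamardWeight_nonneg α β hτ hτx) (hadamardWeight_nonneg φ φ' hσ hσx)
  have hcross := mul_le_mul_of_nonneg_left (cross_le_of_synchronous hhτ hhσ hsync) hw
  simp only [Hker_eq_hadamardWeight_mul]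
  linear_combination hcross

theorem stmt_16_general (α β φ φ' x : ℝ) (f g h : ℝ → ℝ) (hα : 0 < α) (hφ : 0 < φ)
    (hβ : β ∈ Set.Ioc (0:ℝ) 1) (hφ' : φ' ∈ Set.Ioc (0:ℝ) 1)
    (hh : ∀ t ∈ Set.Ici (1:ℝ), 0 < h t)
    (hfint : IntegrableOn (Hker α β x f) (Set.Ioo 1 x))
    (hhint : IntegrableOn (Hker α β x h) (Set.Ioo 1 x))
    (hgfint : IntegrableOn (Hker α β x (fun t => g t * f t)) (Set.Ioo 1 x))
    (hghint : IntegrableOn (Hker α β x (fun t => g t * h t)) (Set.Ioo 1 x))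
    (hfint' : IntegrableOn (Hker φ φ' x f) (Set.Ioo 1 x))
    (hhint' : IntegrableOn (Hker φ φ' x h) (Set.Ioo 1 x))
    (hgfint' : IntegrableOn (Hker φ φ' x (fun t => g t * f t)) (Set.Ioo 1 x))
    (hghint' : IntegrableOn (Hker φ φ' x (fun t => g t * h t)) (Set.Ioo 1 x))
    (hsync : ∀ τ ∈ Set.Ioo (1:ℝ) x, ∀ σ ∈ Set.Ioo (1:ℝ) x,
      0 ≤ (g τ - g σ) * (f σ / h σ - f τ / h τ)) :
    H α β x h * H φ φ' x (fun t => g t * f t) +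
        H φ φ' x h * H α β x (fun t => g t * f t) ≤
      H α β x f * H φ φ' x (fun t => g t * h t) +
        H φ φ' x f * H α β x (fun t => g t * h t) := by
  have hcross : ∀ᵐ z ∂((volume.restrict (Set.Ioo 1 x)).prod (volume.restrict (Set.Ioo 1 x))),
      Hker α β x h z.1 * Hker φ φ' x (fun t => g t * f t) z.2 +
          Hker α β x (fun t => g t * f t) z.1 * Hker φ φ' x h z.2 ≤
        Hker α β x f z.1 * Hker φ φ' x (fun t => g t * h t) z.2 +
          Hker α β x (fun t => g t * h t) z.1 * Hker φ φ' x f z.2 := by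
    rw [Measure.prod_restrict]
    refine ae_restrict_of_forall_mem (measurableSet_Ioo.prod measurableSet_Ioo) ?_
    rintro ⟨τ, σ⟩ ⟨hτ, hσ⟩
    exact Hker_cross_le_of_synchronous α β φ φ' x (by linarith [hτ.1]) hτ.2.le
      (by linarith [hσ.1]) hσ.2.le (hh τ (Set.mem_Ici.2 hτ.1.le)) (hh σ (Set.mem_Ici.2 hσ.1.le))
      (hsync τ hτ σ hσ)
  have hint := integral_mul_add_integral_mul_le_of_ae hfint hghint' hghint hfint' hhint hgfint'
    hgfint hhint' hcross
  have hC := mul_nonneg (hadamard_normalization_nonneg hα hβ.1.le)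
    (hadamard_normalization_nonneg hφ hφ'.1.le)
  simp only [H]
  linear_combination mul_le_mul_of_nonneg_left hint hC

theorem stmt_16 (α β φ φ' x : ℝ) (f g h : ℝ → ℝ) (hα : 0 < α) (hφ : 0 < φ)
    (hβ : β ∈ Set.Ioc (0:ℝ) 1) (hφ' : φ' ∈ Set.Ioc (0:ℝ) 1) (hx : 1 < x)
    (hf : ∀ t ∈ Set.Ici (1:ℝ), 0 < f t) (hg : ∀ t ∈ Set.Ici (1:ℝ), 0 < g t)
    (hh : ∀ t ∈ Set.Ici (1:ℝ), 0 < h t)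
    (hfc : ContinuousOn f (Set.Ici 1)) (hgc : ContinuousOn g (Set.Ici 1))
    (hhc : ContinuousOn h (Set.Ici 1))
    (hfint : IntegrableOn (Hker α β x f) (Set.Ioo 1 x))
    (hhint : IntegrableOn (Hker α β x h) (Set.Ioo 1 x))
    (hgfint : IntegrableOn (Hker α β x (fun t => g t * f t)) (Set.Ioo 1 x))
    (hghint : IntegrableOn (Hker α β x (fun t => g t * h t)) (Set.Ioo 1 x))
    (hfint' : IntegrableOn (Hker φ φ' x f) (Set.Ioo 1 x))
    (hhint' : IntegrableOn (Hker φ φ' x h) (Set.Ioo 1 x))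
    (hgfint' : IntegrableOn (Hker φ φ' x (fun t => g t * f t)) (Set.Ioo 1 x))
    (hghint' : IntegrableOn (Hker φ φ' x (fun t => g t * h t)) (Set.Ioo 1 x))
    (hsync : ∀ τ ∈ Set.Ioo (1:ℝ) x, ∀ σ ∈ Set.Ioo (1:ℝ) x,
      0 ≤ (g τ - g σ) * (f σ / h σ - f τ / h τ)) :
    H α β x h * H φ φ' x (fun t => g t * f t) +
        H φ φ' x h * H α β x (fun t => g t * f t) ≤
      H α β x f * H φ φ' x (fun t => g t * h t) +
        H φ φ' x f * H α β x (fun t => g t * h t) :=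
  stmt_16_general α β φ φ' x f g h hα hφ hβ hφ' hh hfint hhint hgfint hghint hfint' hhint' hgfint'
    hghint' hsync
end
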